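/- Let D be a combinatorial knot diagram (i.e., its strand set S is connected under adjacency) in which the two understrands of every crossing are distinct strands, suppose D is k-meridionally colorable with k ≥ 2 via a sequence of coloring moves with final coloring f : S → {1,…,k}, and let h be the height function of the associated coloring sequence. If c is a crossing with understrands s_p, s_q and overstrand s_r, and f(s_p) = f(s_q), then h(s_r) > min{h(s_p), h(s_q)}. -/

import Mathlib

/-- A combinatorial link diagram: `n` strands and `n` crossings; each crossing has an
(unordered, here recorded as ordered) pair of understrands and an overstrand; every
strand occurs as an understrand of exactly two crossings, counted with multiplicity. -/
structure LinkDiagram where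
  n : ℕ
  Strand : Type
  Crossing : Type
  [strandFintype : Fintype Strand]
  [strandDecEq : DecidableEq Strand]
  [crossingFintype : Fintype Crossing]
  card_strand : Fintype.card Strand = n
  card_crossing : Fintype.card Crossing = n
  under1 : Crossing → Strand
  under2 : Crossing → Strand
  overStrand : Crossing → Strand
  under_twice : ∀ s : Strand,
    Nat.card {c : Crossing // under1 c = s} + Nat.card {c : Crossing // under2 c = s} = 2

attribute [instance] LinkDiagram.strandFintype LinkDiagram.strandDecEq
  LinkDiagram.crossingFintype

namespace LinkDiagram

/-- Two strands are adjacent if they are the two understrands of a common crossing. -/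
def Adj (D : LinkDiagram) (s t : D.Strand) : Prop :=
  ∃ c : D.Crossing, (D.under1 c = s ∧ D.under2 c = t) ∨ (D.under1 c = t ∧ D.under2 c = s)

/-- A subset `B` of the strands is connected if any two of its elements are joined by a
path of adjacent strands lying within `B`. -/
def ConnectedIn (D : LinkDiagram) (B : Set D.Strand) : Prop :=
  ∀ s ∈ B, ∀ t ∈ B,
    Relation.ReflTransGen (fun a b => a ∈ B ∧ b ∈ B ∧ D.Adj a b) s t

/-- The connected component (under adjacency) of the strand `s`. -/
def component (D : LinkDiagram) (s : D.Strand) : Set D.Strand :=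
  {t | Relation.ReflTransGen D.Adj s t}

/-- A witness that `D` is `k`-meridionally colorable: `k` distinct seed strands, partial
colorings `f i` at each stage `i = 0, …, n-k` (a strand not yet colored has value `none`),
where stage `0` colors the seed `j` with color `j` and nothing else, and each stage
`i → i+1` is a coloring move assigning a color to the single new strand `newStrand i`:
it is an understrand at a crossing whose other understrand and overstrand are already
colored, and it receives the color of the other understrand.  At the final stage
`n - k`, every strand is colored. -/
structure ColoringProcess (D : LinkDiagram) (k : ℕ) where
  seed : Fin k → D.Strand
  seed_inj : Function.Injective seed
  f : ℕ → D.Strand → Option (Fin k)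
  newStrand : ℕ → D.Strand
  f0_seed : ∀ j : Fin k, f 0 (seed j) = some j
  f0_none : ∀ s : D.Strand, (∀ j : Fin k, seed j ≠ s) → f 0 s = none
  move_none : ∀ i < D.n - k, f i (newStrand i) = none
  move_eq : ∀ i < D.n - k, ∀ s : D.Strand, s ≠ newStrand i → f (i + 1) s = f i s
  move_adj : ∀ i < D.n - k, ∃ c : D.Crossing, ∃ si : D.Strand,
      ((D.under1 c = newStrand i ∧ D.under2 c = si) ∨
        (D.under1 c = si ∧ D.under2 c = newStrand i)) ∧
      (f i si).isSome ∧ (f i (D.overStrand c)).isSome ∧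
      f (i + 1) (newStrand i) = f i si
  final : ∀ s : D.Strand, (f (D.n - k) s).isSome

/-- The final coloring of a coloring process. -/
def ColoringProcess.final' {D : LinkDiagram} {k : ℕ} (p : ColoringProcess D k) :
    D.Strand → Option (Fin k) :=
  p.f (D.n - k)

/-- `h` is the height function of the coloring sequence associated to the process `p`:
the `j`-th seed (j = 1, …, k) has height `-j`, and the strand colored by the `i`-th
coloring move has height `-(k + i)`. -/
def IsHeightFunction {D : LinkDiagram} {k : ℕ} (p : ColoringProcess D k)
    (h : D.Strand → ℤ) : Prop :=
  (∀ j : Fin k, h (p.seed j) = -((j : ℕ) + 1 : ℤ)) ∧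
  (∀ i < D.n - k, h (p.newStrand i) = -((k : ℤ) + (i : ℕ) + 1))

end LinkDiagram

/-!
Suppose the crossing `c` is not the crossing of any coloring move, and let `T` be the color
class of its understrands. `T` consists of one seed and the strands colored by the moves into
`T`; the crossings of these moves are pairwise distinct, differ from `c` and have both
understrands in `T`, so at least `#T` crossings have both understrands in `T`. Since every strand
is an understrand exactly twice, no crossing then has exactly one understrand in `T`, and
connectedness forces `T` to contain every strand, which is impossible as the seeds carry `k ≥ 2`
different colors. Hence `c` is the crossing of some move; its new strand is an understrand of `c`
and lies below the overstrand, which was colored before that move.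
-/

namespace LinkDiagram

open Finset

variable {D : LinkDiagram}

def internalCrossings (D : LinkDiagram) (T : Finset D.Strand) : Finset D.Crossing :=
  {c | D.under1 c ∈ T ∧ D.under2 c ∈ T}

lemma card_under1_mem_add_card_under2_mem (T : Finset D.Strand) :
    #{c | D.under1 c ∈ T} + #{c | D.under2 c ∈ T} = 2 * #T := by
  rw [← sum_card_fiberwise_eq_card_filter _ T D.under1,
    ← sum_card_fiberwise_eq_card_filter _ T D.under2, ← sum_add_distrib,
    sum_const_nat fun s _ => ?_, mul_comm]
  simpa only [Nat.card_eq_fintype_card, Fintype.card_subtype] using D.under_twice s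

lemma under1_mem_iff_under2_mem_of_card_le {T : Finset D.Strand}
    (hT : #T ≤ #(D.internalCrossings T)) (c : D.Crossing) :
    D.under1 c ∈ T ↔ D.under2 c ∈ T := by
  classical
  set A₁ : Finset D.Crossing := {c' | D.under1 c' ∈ T}
  set A₂ : Finset D.Crossing := {c' | D.under2 c' ∈ T}
  have hinter : A₁ ∩ A₂ = D.internalCrossings T := by
    rw [internalCrossings, ← filter_and]
  have hcard := card_union_add_card_inter A₁ A₂
  rw [card_under1_mem_add_card_under2_mem, hinter] at hcard
  have hunion : A₁ ∪ A₂ = A₁ ∩ A₂ :=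
    (eq_of_subset_of_card_le (inter_subset_left.trans subset_union_left)
      (by rw [hinter]; omega)).symm
  have hc := congrArg (c ∈ ·) hunion
  simp only [A₁, A₂, mem_union, mem_inter, mem_filter, mem_univ, true_and, eq_iff_iff] at hc
  tauto

lemma eq_univ_of_under1_mem_iff_under2_mem (hknot : D.ConnectedIn Set.univ)
    {T : Finset D.Strand} {s : D.Strand} (hs : s ∈ T)
    (hT : ∀ c, D.under1 c ∈ T ↔ D.under2 c ∈ T) : T = univ := by
  refine eq_univ_of_forall fun t => ?_
  induction hknot s trivial t trivial with
  | refl => exact hs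
  | tail _ hadj ih =>
    obtain ⟨c, ⟨rfl, rfl⟩ | ⟨rfl, rfl⟩⟩ := hadj.2.2
    exacts [(hT c).1 ih, (hT c).2 ih]

lemma card_internalCrossings_lt (hknot : D.ConnectedIn Set.univ) {T : Finset D.Strand}
    (hT : T.Nonempty) (hT_ne : T ≠ univ) : #(D.internalCrossings T) < #T := by
  by_contra! hle
  obtain ⟨s, hs⟩ := hT
  exact hT_ne (eq_univ_of_under1_mem_iff_under2_mem hknot hs
    (under1_mem_iff_under2_mem_of_card_le hle))

namespace ColoringProcess

variable {k : ℕ} (p : ColoringProcess D k)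

lemma f_eq_some_of_le {i i' : ℕ} (hii' : i ≤ i') (hi' : i' ≤ D.n - k) {s : D.Strand}
    {v : Fin k} (hs : p.f i s = some v) : p.f i' s = some v := by
  induction i', hii' using Nat.le_induction with
  | base => exact hs
  | succ m _ ih =>
    have hm : m < D.n - k := hi'
    have hm_eq := ih hm.le
    have hne : s ≠ p.newStrand m := by
      rintro rfl
      simp [p.move_none m hm] at hm_eq
    rw [p.move_eq m hm s hne, hm_eq]

lemma final'_eq_some_of_f_eq_some {i : ℕ} (hi : i ≤ D.n - k) {s : D.Strand} {v : Fin k}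
    (hs : p.f i s = some v) : p.final' s = some v :=
  p.f_eq_some_of_le hi le_rfl hs

lemma final'_seed (j : Fin k) : p.final' (p.seed j) = some j :=
  p.final'_eq_some_of_f_eq_some (Nat.zero_le _) (p.f0_seed j)

lemma f_newStrand_eq_none {i i' : ℕ} (hii' : i ≤ i') (hi' : i' < D.n - k) :
    p.f i (p.newStrand i') = none := by
  by_contra hne
  obtain ⟨v, hv⟩ := Option.ne_none_iff_exists'.mp hne
  have hv' := p.f_eq_some_of_le hii' hi'.le hv
  simp [p.move_none i' hi'] at hv'

lemma exists_seed_or_newStrand_of_isSome {i : ℕ} (hi : i ≤ D.n - k) {s : D.Strand}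
    (hs : (p.f i s).isSome) : (∃ j, p.seed j = s) ∨ ∃ i' < i, p.newStrand i' = s := by
  induction i generalizing s with
  | zero =>
    by_contra! h
    simp [p.f0_none s h.1] at hs
  | succ m ih =>
    by_cases hsm : s = p.newStrand m
    · exact Or.inr ⟨m, m.lt_succ_self, hsm.symm⟩
    · rw [p.move_eq m hi s hsm] at hs
      obtain h | ⟨i', hi', h⟩ := ih (Nat.le_of_succ_le hi) hs
      exacts [Or.inl h, Or.inr ⟨i', hi'.trans m.lt_succ_self, h⟩]

noncomputable def moveCrossing (i : Fin (D.n - k)) : D.Crossing :=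
  (p.move_adj i i.2).choose

lemma moveCrossing_spec (i : Fin (D.n - k)) :
    ∃ si, ((D.under1 (p.moveCrossing i) = p.newStrand i ∧ D.under2 (p.moveCrossing i) = si) ∨
        (D.under1 (p.moveCrossing i) = si ∧ D.under2 (p.moveCrossing i) = p.newStrand i)) ∧
      (p.f i si).isSome ∧ (p.f i (D.overStrand (p.moveCrossing i))).isSome ∧
      p.f (i + 1) (p.newStrand i) = p.f i si :=
  (p.move_adj i i.2).choose_spec

lemma newStrand_eq_under_moveCrossing (i : Fin (D.n - k)) :
    D.under1 (p.moveCrossing i) = p.newStrand i ∨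
      D.under2 (p.moveCrossing i) = p.newStrand i := by
  obtain ⟨_, ⟨h, -⟩ | ⟨-, h⟩, -⟩ := p.moveCrossing_spec i
  exacts [Or.inl h, Or.inr h]

lemma isSome_overStrand_moveCrossing (i : Fin (D.n - k)) :
    (p.f i (D.overStrand (p.moveCrossing i))).isSome :=
  (p.moveCrossing_spec i).choose_spec.2.2.1

lemma exists_f_succ_under_moveCrossing (i : Fin (D.n - k)) :
    ∃ v, p.f (i + 1) (D.under1 (p.moveCrossing i)) = some v ∧
      p.f (i + 1) (D.under2 (p.moveCrossing i)) = some v := by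
  obtain ⟨si, hunder, hsi, -, hnew⟩ := p.moveCrossing_spec i
  obtain ⟨v, hv⟩ := Option.isSome_iff_exists.mp hsi
  have hsi' : p.f (i + 1) si = some v := p.f_eq_some_of_le (Nat.le_succ _) i.2 hv
  rw [hv] at hnew
  refine ⟨v, ?_⟩
  rcases hunder with ⟨h₁, h₂⟩ | ⟨h₁, h₂⟩ <;> rw [h₁, h₂] <;> tauto

lemma final'_under1_moveCrossing (i : Fin (D.n - k)) :
    p.final' (D.under1 (p.moveCrossing i)) = p.final' (D.under2 (p.moveCrossing i)) := by
  obtain ⟨v, h₁, h₂⟩ := p.exists_f_succ_under_moveCrossing i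
  rw [p.final'_eq_some_of_f_eq_some i.2 h₁, p.final'_eq_some_of_f_eq_some i.2 h₂]

/-- At a later move both understrands of `moveCrossing i` are already colored, while the new
strand of the later move is not. -/
lemma moveCrossing_injective : Function.Injective p.moveCrossing := by
  suffices ∀ i i' : Fin (D.n - k), i < i' → p.moveCrossing i ≠ p.moveCrossing i' by
    intro i i' heq
    by_contra hne
    rcases lt_or_gt_of_ne hne with hlt | hlt
    exacts [this i i' hlt heq, this i' i hlt heq.symm]
  intro i i' hlt heq
  obtain ⟨v, h₁, h₂⟩ := p.exists_f_succ_under_moveCrossing i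
  have hnone := p.f_newStrand_eq_none (le_refl (i' : ℕ)) i'.2
  rcases p.newStrand_eq_under_moveCrossing i' with h | h <;> rw [← h, ← heq] at hnone
  · simp [p.f_eq_some_of_le hlt i'.2.le h₁] at hnone
  · simp [p.f_eq_some_of_le hlt i'.2.le h₂] at hnone

def colorClass (j : Fin k) : Finset D.Strand :=
  {s | p.final' s = some j}

def movesInto (j : Fin k) : Finset (Fin (D.n - k)) :=
  {i | p.final' (p.newStrand i) = some j}

lemma card_colorClass_le (j : Fin k) : #(p.colorClass j) ≤ #(p.movesInto j) + 1 := by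
  classical
  have hsub : p.colorClass j ⊆
      insert (p.seed j) ((p.movesInto j).image fun i : Fin (D.n - k) => p.newStrand i) := by
    intro s hs
    replace hs : p.final' s = some j := (mem_filter.mp hs).2
    rcases p.exists_seed_or_newStrand_of_isSome le_rfl (p.final s) with
      ⟨j', rfl⟩ | ⟨i, hi, rfl⟩
    · rw [p.final'_seed, Option.some_inj] at hs
      simp [hs]
    · exact mem_insert_of_mem (mem_image.mpr ⟨⟨i, hi⟩, by simpa [movesInto] using hs, rfl⟩)
  grw [card_le_card hsub, card_insert_le, card_image_le]

lemma moveCrossing_mem_internalCrossings {j : Fin k} {i : Fin (D.n - k)}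
    (hi : i ∈ p.movesInto j) : p.moveCrossing i ∈ D.internalCrossings (p.colorClass j) := by
  replace hi : p.final' (p.newStrand i) = some j := (mem_filter.mp hi).2
  simp only [internalCrossings, colorClass, mem_filter, mem_univ, true_and]
  have hfin := p.final'_under1_moveCrossing i
  rcases p.newStrand_eq_under_moveCrossing i with h | h <;> rw [h] at hfin ⊢
  exacts [⟨hi, hfin.symm.trans hi⟩, ⟨hfin.trans hi, hi⟩]

lemma colorClass_ne_univ (hk : 2 ≤ k) (j : Fin k) : p.colorClass j ≠ univ := by
  have : Nontrivial (Fin k) := Fin.nontrivial_iff_two_le.mpr hk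
  obtain ⟨j', hj'⟩ := exists_ne j
  intro hT
  have hmem : p.seed j' ∈ p.colorClass j := hT ▸ mem_univ _
  rw [colorClass, mem_filter, p.final'_seed, Option.some_inj] at hmem
  exact hj' hmem.2

theorem exists_moveCrossing_eq (hknot : D.ConnectedIn Set.univ) (hk : 2 ≤ k) {c : D.Crossing}
    (hcol : p.final' (D.under1 c) = p.final' (D.under2 c)) : ∃ i, p.moveCrossing i = c := by
  classical
  by_contra! hc
  obtain ⟨j, hj⟩ := Option.isSome_iff_exists.mp (p.final (D.under1 c))
  have hc_mem : c ∈ D.internalCrossings (p.colorClass j) := by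
    simp only [internalCrossings, colorClass, mem_filter, mem_univ, true_and]
    exact ⟨hj, hcol ▸ hj⟩
  have hc_notMem : c ∉ (p.movesInto j).image p.moveCrossing := by
    simpa only [mem_image, not_exists, not_and] using fun i _ => hc i
  have hcard : #(p.colorClass j) ≤ #(D.internalCrossings (p.colorClass j)) :=
    calc #(p.colorClass j) ≤ #(p.movesInto j) + 1 := p.card_colorClass_le j
      _ = #(insert c ((p.movesInto j).image p.moveCrossing)) := by
        rw [card_insert_of_notMem hc_notMem, card_image_of_injective _ p.moveCrossing_injective]
      _ ≤ #(D.internalCrossings (p.colorClass j)) := by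
        refine card_le_card (insert_subset hc_mem fun c' hc' => ?_)
        obtain ⟨i, hi, rfl⟩ := mem_image.mp hc'
        exact p.moveCrossing_mem_internalCrossings hi
  have hT : (p.colorClass j).Nonempty := ⟨D.under1 c, mem_filter.mpr ⟨mem_univ _, hj⟩⟩
  exact (card_internalCrossings_lt hknot hT (p.colorClass_ne_univ hk j)).not_ge hcard

end ColoringProcess

lemma IsHeightFunction.lt_of_isSome {k : ℕ} {p : ColoringProcess D k} {h : D.Strand → ℤ}
    (hh : IsHeightFunction p h) {i : ℕ} (hi : i < D.n - k) {s : D.Strand}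
    (hs : (p.f i s).isSome) : -((k : ℤ) + i + 1) < h s := by
  rcases p.exists_seed_or_newStrand_of_isSome hi.le hs with ⟨j, rfl⟩ | ⟨i', hi', rfl⟩
  · rw [hh.1 j]
    have : (j : ℤ) + 1 ≤ k := by exact_mod_cast j.2
    omega
  · rw [hh.2 i' (hi'.trans hi)]
    omega

end LinkDiagram

theorem wirtinger_knot_overstrand_height_general (D : LinkDiagram)
    (hknot : D.ConnectedIn Set.univ)
    (k : ℕ) (hk : 2 ≤ k) (p : LinkDiagram.ColoringProcess D k)
    (h : D.Strand → ℤ) (hh : LinkDiagram.IsHeightFunction p h)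
    (c : D.Crossing)
    (hcol : p.final' (D.under1 c) = p.final' (D.under2 c)) :
    min (h (D.under1 c)) (h (D.under2 c)) < h (D.overStrand c) := by
  obtain ⟨i, rfl⟩ := p.exists_moveCrossing_eq hknot hk hcol
  have hover := hh.lt_of_isSome i.2 (p.isSome_overStrand_moveCrossing i)
  rw [← hh.2 i i.2] at hover
  rcases p.newStrand_eq_under_moveCrossing i with hnew | hnew
  · exact (min_le_left _ _).trans_lt (hnew ▸ hover)
  · exact (min_le_right _ _).trans_lt (hnew ▸ hover)

/-- Let `D` be a knot diagram (strand set connected under adjacency)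
in which the two understrands of every crossing are distinct, `k`-meridionally
colorable with `k ≥ 2`, with final coloring `p.final'` and height function `h`.
If the two understrands of a crossing `c` get the same final color, then the height of
the overstrand of `c` exceeds the minimum of the heights of the understrands. -/
theorem wirtinger_knot_overstrand_height (D : LinkDiagram)
    (hknot : D.ConnectedIn Set.univ)
    (hdist : ∀ c : D.Crossing, D.under1 c ≠ D.under2 c)
    (k : ℕ) (hk : 2 ≤ k) (p : LinkDiagram.ColoringProcess D k)
    (h : D.Strand → ℤ) (hh : LinkDiagram.IsHeightFunction p h)
    (c : D.Crossing)
    (hcol : p.final' (D.under1 c) = p.final' (D.under2 c)) :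
    min (h (D.under1 c)) (h (D.under2 c)) < h (D.overStrand c) :=
  wirtinger_knot_overstrand_height_general D hknot k hk p h hh c hcol
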